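/- Let (X_poi, X_dir) be an irredundant solution of the polyhedral projection problem computing the upper image 𝒫 of a feasible VLP with L ∩ C = {0} (L the lineality space of 𝒫, C the pointed polyhedral ordering cone). Then for every (x,y) ∈ X_poi, the point x is a minimizer of the VLP, i.e., y ∉ 𝒫 + C\{0}. -/

import Mathlib

/-!
Suppose `s ∈ Xpoi` and `s.2 = u + c` with `u ∈ 𝒫` and `0 ≠ c ∈ C`. Since `𝒫 = P S + C`, `c` is a
recession direction of `𝒫 = conv Y + K` (with `Y` the points and `K` the cone of the solution);
as `conv Y` is bounded and the finitely generated cone `K` is closed, `c ∈ K`. Writing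
`u = (1 - t) s.2 + t p + k` with `p ∈ conv (Y \ {s.2})` and `k ∈ K`, we get
`t s.2 = t p + (k + c)`. Here `k + c ≠ 0`, for otherwise `c` and `-c = k` are both recession
directions and `c ∈ L ∩ C = {0}`; hence `t ≠ 0` and `s.2 ∈ conv (Y \ {s.2}) + K`. Then dropping `s`
from `Xpoi` still yields a solution, contradicting irredundancy.
-/

open Pointwise Set

/-- `cone B = {λ x : λ ≥ 0, x ∈ conv B}`, with `cone ∅ = {0}`. -/
def coneOf {q : ℕ} (B : Set (Fin q → ℝ)) : Set (Fin q → ℝ) :=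
  insert 0 {x | ∃ l : ℝ, 0 ≤ l ∧ ∃ b ∈ convexHull ℝ B, x = l • b}

/-- recession cone `0⁺P = {d : P + d ⊆ P}` -/
def recCone {q : ℕ} (P : Set (Fin q → ℝ)) : Set (Fin q → ℝ) :=
  {d | ∀ y ∈ P, y + d ∈ P}

/-- `(Xpoi, Xdir)` is a solution of the polyhedral projection problem associated
to the VLP `min Px s.t. Ax ≥ b` with ordering cone `{y : Zᵀy ≥ 0}`, computing
the upper image `UI`. -/
def IsPPSolution {m n q r : ℕ} (A : Matrix (Fin m) (Fin n) ℝ) (b : Fin m → ℝ)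
    (P : Matrix (Fin q) (Fin n) ℝ) (Z : Matrix (Fin q) (Fin r) ℝ)
    (UI : Set (Fin q → ℝ))
    (Xpoi Xdir : Set ((Fin n → ℝ) × (Fin q → ℝ))) : Prop :=
  Xpoi.Finite ∧ Xdir.Finite ∧ Xpoi.Nonempty ∧
  (∀ s ∈ Xpoi, (∀ i, b i ≤ A.mulVec s.1 i) ∧
    (∀ j, Z.transpose.mulVec (P.mulVec s.1) j ≤ Z.transpose.mulVec s.2 j)) ∧
  (∀ s ∈ Xdir, s ≠ 0 ∧ (∀ i, (0:ℝ) ≤ A.mulVec s.1 i) ∧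
    (∀ j, Z.transpose.mulVec (P.mulVec s.1) j ≤ Z.transpose.mulVec s.2 j)) ∧
  UI = convexHull ℝ (Prod.snd '' Xpoi) + coneOf (Prod.snd '' Xdir)

/-- An irredundant solution: no proper sub-pair is also a solution. -/
def IsIrredundantPPSolution {m n q r : ℕ} (A : Matrix (Fin m) (Fin n) ℝ)
    (b : Fin m → ℝ) (P : Matrix (Fin q) (Fin n) ℝ) (Z : Matrix (Fin q) (Fin r) ℝ)
    (UI : Set (Fin q → ℝ))
    (Xpoi Xdir : Set ((Fin n → ℝ) × (Fin q → ℝ))) : Prop :=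
  IsPPSolution A b P Z UI Xpoi Xdir ∧
  ∀ Vpoi Vdir, Vpoi ⊆ Xpoi → Vdir ⊆ Xdir →
    IsPPSolution A b P Z UI Vpoi Vdir → Vpoi = Xpoi ∧ Vdir = Xdir

namespace PointedCone

variable {𝕜 E : Type*} [Field 𝕜] [LinearOrder 𝕜] [IsStrictOrderedRing 𝕜]
  [AddCommGroup E] [Module 𝕜 E]

lemma mem_hull_finset_iff {T : Finset E} {x : E} :
    x ∈ hull 𝕜 (T : Set E) ↔ ∃ l : E → 𝕜, (∀ e ∈ T, 0 ≤ l e) ∧ ∑ e ∈ T, l e • e = x := by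
  classical
  rw [Submodule.mem_span_finset]
  constructor
  · rintro ⟨f, -, rfl⟩
    exact ⟨fun e => f e, fun e _ => (f e).2, rfl⟩
  · rintro ⟨l, hl, rfl⟩
    refine ⟨fun e => if h : e ∈ T then ⟨l e, hl e h⟩ else 0, ?_, ?_⟩
    · exact fun e he => by_contra fun h => he (dif_neg h)
    · exact Finset.sum_congr rfl fun e he => by simp [he, Nonneg.mk_smul]

lemma exists_relation_pos_of_not_linearIndepOn {T : Finset E}
    (hT : ¬LinearIndepOn 𝕜 id (T : Set E)) :
    ∃ g : E → 𝕜, ∑ e ∈ T, g e • e = 0 ∧ ∃ e ∈ T, 0 < g e := by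
  obtain ⟨g, hg, e, he, hge⟩ := not_linearIndepOn_finset_iff.mp hT
  rcases hge.lt_or_gt with hneg | hpos
  · refine ⟨-g, ?_, e, he, neg_pos.mpr hneg⟩
    simpa [neg_smul, Finset.sum_neg_distrib] using hg
  · exact ⟨g, hg, e, he, hpos⟩

/-- Subtracting the right multiple of a linear relation kills one coefficient and keeps the
others nonnegative. -/
lemma exists_mem_hull_erase_of_not_linearIndepOn [DecidableEq E] {T : Finset E} {x : E}
    (hT : ¬LinearIndepOn 𝕜 id (T : Set E)) (hx : x ∈ hull 𝕜 (T : Set E)) :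
    ∃ e ∈ T, x ∈ hull 𝕜 (T.erase e : Set E) := by
  obtain ⟨l, hl, rfl⟩ := mem_hull_finset_iff.mp hx
  obtain ⟨g, hg, hgpos⟩ := exists_relation_pos_of_not_linearIndepOn hT
  obtain ⟨e₀, he₀, hmin⟩ := ({e ∈ T | 0 < g e}).exists_min_image (fun e => l e / g e)
    (by simpa [Finset.filter_nonempty_iff] using hgpos)
  obtain ⟨he₀T, hge₀⟩ := Finset.mem_filter.mp he₀
  set t := l e₀ / g e₀
  have ht : 0 ≤ t := div_nonneg (hl e₀ he₀T) hge₀.le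
  refine ⟨e₀, he₀T, mem_hull_finset_iff.mpr ⟨fun e => l e - t * g e, fun e he => ?_, ?_⟩⟩
  · have heT := Finset.mem_of_mem_erase he
    rcases le_or_gt (g e) 0 with hge | hge
    · nlinarith [hl e heT]
    · rw [sub_nonneg, ← le_div_iff₀ hge]
      exact hmin e (Finset.mem_filter.mpr ⟨heT, hge⟩)
  · have hzero : (l e₀ - t * g e₀) • e₀ = 0 := by
      simp [t, div_mul_cancel₀ _ hge₀.ne']
    rw [Finset.sum_erase (f := fun e => (l e - t * g e) • e) _ hzero]
    simp only [sub_smul, mul_smul, Finset.sum_sub_distrib, ← Finset.smul_sum, hg, smul_zero,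
      sub_zero]

theorem exists_linearIndepOn_subset_of_mem_hull (T : Finset E) {x : E}
    (hx : x ∈ hull 𝕜 (T : Set E)) :
    ∃ T' ⊆ T, LinearIndepOn 𝕜 id (T' : Set E) ∧ x ∈ hull 𝕜 (T' : Set E) := by
  classical
  induction T using Finset.strongInduction with
  | _ T ih =>
    by_cases hT : LinearIndepOn 𝕜 id (T : Set E)
    · exact ⟨T, subset_rfl, hT, hx⟩
    obtain ⟨e, he, hxe⟩ := exists_mem_hull_erase_of_not_linearIndepOn hT hx
    obtain ⟨T', hT', hli, hxT'⟩ := ih _ (Finset.erase_ssubset he) hxe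
    exact ⟨T', hT'.trans (Finset.erase_subset _ _), hli, hxT'⟩

section Topology

variable {E : Type*} [AddCommGroup E] [Module ℝ E] [TopologicalSpace E] [IsTopologicalAddGroup E]
  [ContinuousSMul ℝ E] [T2Space E]

lemma isClosed_hull_of_linearIndepOn {T : Finset E} (hT : LinearIndepOn ℝ id (T : Set E)) :
    IsClosed (hull ℝ (T : Set E) : Set E) := by
  set f := Fintype.linearCombination ℝ (fun e : T => (e : E))
  have hf : Topology.IsClosedEmbedding f :=
    LinearMap.isClosedEmbedding_of_injective (LinearMap.ker_eq_bot.mpr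
      (linearIndependent_iff_injective_fintypeLinearCombination.mp hT))
  have himage : (hull ℝ (T : Set E) : Set E) = f '' Ici 0 := by
    ext x
    constructor
    · intro hx
      obtain ⟨l, hl, rfl⟩ := mem_hull_finset_iff.mp hx
      refine ⟨fun e => l e, fun e => hl e e.2, ?_⟩
      simp [f, Fintype.linearCombination_apply, Finset.sum_attach T (fun e => l e • e)]
    · rintro ⟨l, hl, rfl⟩
      rw [Fintype.linearCombination_apply]
      exact Submodule.sum_mem _ fun e _ => smul_mem _ (hl e) (subset_hull e.2)
  rw [himage]
  exact hf.isClosedMap _ isClosed_Ici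

theorem isClosed_hull_finset (T : Finset E) : IsClosed (hull ℝ (T : Set E) : Set E) := by
  classical
  have hunion : (hull ℝ (T : Set E) : Set E) =
      ⋃ (T' : Finset E) (_ : T' ∈ T.powerset.filter
        (fun T' : Finset E => LinearIndepOn ℝ id (T' : Set E))), (hull ℝ (T' : Set E) : Set E) := by
    ext x
    simp only [mem_iUnion, Finset.mem_filter, Finset.mem_powerset, exists_prop, SetLike.mem_coe]
    constructor
    · intro hx
      obtain ⟨T', hT', hli, hxT'⟩ := exists_linearIndepOn_subset_of_mem_hull T hx
      exact ⟨T', ⟨hT', hli⟩, hxT'⟩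
    · rintro ⟨T', ⟨hT', -⟩, hxT'⟩
      exact Submodule.span_mono (Finset.coe_subset.mpr hT') hxT'
  rw [hunion]
  exact isClosed_biUnion_finset fun T' hT' =>
    isClosed_hull_of_linearIndepOn (Finset.mem_filter.mp hT').2

theorem isClosed_hull_of_finite {D : Set E} (hD : D.Finite) : IsClosed (hull ℝ D : Set E) := by
  simpa using isClosed_hull_finset hD.toFinset

end Topology

open Filter Topology in
/-- Writing `y₀ + (n + 1) • d = pₙ + kₙ` with `pₙ ∈ B`, `kₙ ∈ K`, the cone elements
`kₙ / (n + 1)` differ from `d` by `(y₀ - pₙ) / (n + 1) → 0`. -/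
theorem mem_of_forall_add_mem_bounded_add {E : Type*} [NormedAddCommGroup E] [NormedSpace ℝ E]
    {B : Set E} {K : PointedCone ℝ E} {d : E} (hB : Bornology.IsBounded B) (hBne : B.Nonempty)
    (hK : IsClosed (K : Set E)) (hd : ∀ y ∈ B + K, y + d ∈ B + K) : d ∈ K := by
  obtain ⟨y₀, hy₀⟩ := hBne
  have hray : ∀ n : ℕ, y₀ + (n : ℝ) • d ∈ B + K := by
    intro n
    induction n with
    | zero => simpa using add_mem_add hy₀ K.zero_mem
    | succ n ih => simpa [add_smul, add_assoc] using hd _ ih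
  choose p hp k hk hpk using fun n : ℕ => hray (n + 1)
  obtain ⟨M, hM⟩ := hB.exists_norm_le
  have hk_eq : ∀ n : ℕ, (1 / ((n : ℝ) + 1)) • k n = d + (1 / ((n : ℝ) + 1)) • (y₀ - p n) := by
    intro n
    have hn : (n : ℝ) + 1 ≠ 0 := by positivity
    rw [eq_sub_of_add_eq' (hpk n)]
    push_cast
    simp only [smul_sub, smul_add, smul_smul, one_div, inv_mul_cancel₀ hn, one_smul]
    abel
  have herr : Tendsto (fun n : ℕ => (1 / ((n : ℝ) + 1)) • (y₀ - p n)) atTop (𝓝 0) :=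
    tendsto_one_div_add_atTop_nhds_zero_nat.zero_smul_isBoundedUnder_le
      (isBoundedUnder_of ⟨‖y₀‖ + M, fun n => (norm_sub_le _ _).trans (by simp [hM _ (hp n)])⟩)
  have hlim : Tendsto (fun n : ℕ => (1 / ((n : ℝ) + 1)) • k n) atTop (𝓝 d) := by
    rw [funext hk_eq]
    simpa using herr.const_add d
  exact hK.mem_of_tendsto hlim (Eventually.of_forall fun n => K.smul_mem (by positivity) (hk n))

section ConvexHull

variable {𝕜 E : Type*} [Field 𝕜] [LinearOrder 𝕜] [IsStrictOrderedRing 𝕜]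
  [AddCommGroup E] [Module 𝕜 E] {K : PointedCone 𝕜 E}

theorem convexHull_insert_add_eq {Y : Set E} {y : E} (hy : y ∈ convexHull 𝕜 Y + K) :
    convexHull 𝕜 (insert y Y) + K = convexHull 𝕜 Y + K := by
  refine subset_antisymm ?_ (add_subset_add_right (convexHull_mono (subset_insert y Y)))
  have hconv : Convex 𝕜 (convexHull 𝕜 Y + (K : Set E)) := (convex_convexHull 𝕜 Y).add K.convex
  have hsub : convexHull 𝕜 (insert y Y) ⊆ convexHull 𝕜 Y + K :=
    convexHull_min (insert_subset hy fun z hz =>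
      ⟨z, subset_convexHull 𝕜 Y hz, 0, K.zero_mem, add_zero z⟩) hconv
  calc convexHull 𝕜 (insert y Y) + K ⊆ convexHull 𝕜 Y + K + K := add_subset_add_right hsub
    _ = convexHull 𝕜 Y + K := by
      rw [add_assoc]
      exact congrArg _ K.toAddSubmonoid.coe_add_self_eq

/-- Writing `u = (1 - t) • y + t • p + k`, we get `t • y = t • p + (k + c)`, and `t ≠ 0`
because `k + c ≠ 0`. -/
theorem mem_convexHull_add_of_add_eq {Y : Set E} {y u c : E}
    (hu : u ∈ convexHull 𝕜 (insert y Y) + K) (hc : c ∈ K) (hKc : ∀ k ∈ K, k + c ≠ 0)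
    (hy : u + c = y) : y ∈ convexHull 𝕜 Y + K := by
  obtain ⟨v, hv, k, hk, rfl⟩ := hu
  rcases Y.eq_empty_or_nonempty with rfl | hYne
  · rw [insert_empty_eq, convexHull_singleton, mem_singleton_iff] at hv
    subst hv
    exact absurd (by simpa [add_assoc] using hy) (hKc k hk)
  rw [convexHull_insert hYne, mem_convexJoin] at hv
  obtain ⟨y', hy', p, hp, a, t, -, ht, hat, rfl⟩ := hv
  rw [mem_singleton_iff] at hy'
  subst y'
  have hty : t • y = t • p + (k + c) := by
    rw [eq_sub_of_add_eq hat] at hy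
    linear_combination (norm := module) -hy
  have ht0 : t ≠ 0 := by
    rintro rfl
    exact hKc k hk (by simpa using hty.symm)
  refine ⟨p, hp, t⁻¹ • (k + c), K.smul_mem (inv_nonneg.mpr ht) (K.add_mem hk hc), ?_⟩
  rw [← smul_right_injective E ht0 |>.eq_iff, smul_add, smul_smul, mul_inv_cancel₀ ht0, one_smul,
    hty]

end ConvexHull

end PointedCone

open PointedCone

lemma coneOf_eq_hull {q : ℕ} (B : Set (Fin q → ℝ)) : coneOf B = hull ℝ B := by
  ext x
  constructor
  · rintro (rfl | ⟨l, hl, b, hb, rfl⟩)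
    · exact zero_mem _
    · exact (hull ℝ B).smul_mem hl (convexHull_min subset_hull (hull ℝ B).convex hb)
  · intro hx
    obtain ⟨c, hcB, hc, rfl⟩ := mem_hull_set.mp hx
    rcases c.support.eq_empty_or_nonempty with hempty | hne
    · simp [Finsupp.sum, hempty, coneOf]
    · have hσ : 0 < ∑ e ∈ c.support, c e :=
        Finset.sum_pos (fun e he => (hc e).lt_of_ne' (Finsupp.mem_support_iff.mp he)) hne
      refine mem_insert_of_mem _ ⟨_, hσ.le, c.support.centerMass c id,
        c.support.centerMass_mem_convexHull (fun e _ => hc e) hσ fun e he => hcB he, ?_⟩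
      rw [Finset.centerMass, smul_smul, mul_inv_cancel₀ hσ.ne', one_smul]
      rfl

lemma subset_recCone_add {q : ℕ} {S C : Set (Fin q → ℝ)} (hC : ∀ a ∈ C, ∀ b ∈ C, a + b ∈ C) :
    C ⊆ recCone (S + C) := by
  rintro c hc _ ⟨x, hx, c', hc', rfl⟩
  exact ⟨x, hx, c' + c, hC _ hc' _ hc, (add_assoc _ _ _).symm⟩

lemma image_eq_insert_image_sdiff_singleton {α β : Type*} {f : α → β} {s : Set α} {a : α}
    (ha : a ∈ s) : f '' s = insert (f a) (f '' (s \ {a})) := by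
  rw [← image_insert_eq, insert_sdiff_singleton, insert_eq_of_mem ha]

lemma IsPPSolution.sdiff_singleton {m n q r : ℕ} {A : Matrix (Fin m) (Fin n) ℝ} {b : Fin m → ℝ}
    {P : Matrix (Fin q) (Fin n) ℝ} {Z : Matrix (Fin q) (Fin r) ℝ} {UI : Set (Fin q → ℝ)}
    {Xpoi Xdir : Set ((Fin n → ℝ) × (Fin q → ℝ))} (h : IsPPSolution A b P Z UI Xpoi Xdir)
    {s : (Fin n → ℝ) × (Fin q → ℝ)} (hs : s ∈ Xpoi)
    (hmem : s.2 ∈ convexHull ℝ (Prod.snd '' (Xpoi \ {s})) + coneOf (Prod.snd '' Xdir)) :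
    IsPPSolution A b P Z UI (Xpoi \ {s}) Xdir := by
  obtain ⟨hfin, hfinDir, -, hpoi, hdir, hUI⟩ := h
  have hne : (Xpoi \ {s}).Nonempty := by
    simpa [convexHull_nonempty_iff] using (Set.add_nonempty.mp ⟨_, hmem⟩).1
  refine ⟨hfin.sdiff, hfinDir, hne, fun x hx => hpoi x hx.1, hdir, ?_⟩
  rw [coneOf_eq_hull] at hmem ⊢
  rw [hUI, image_eq_insert_image_sdiff_singleton hs, coneOf_eq_hull,
    convexHull_insert_add_eq hmem]

theorem irredundant_points_are_minimizers_general
    (m n q r : ℕ) (A : Matrix (Fin m) (Fin n) ℝ) (b : Fin m → ℝ)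
    (P : Matrix (Fin q) (Fin n) ℝ) (Z : Matrix (Fin q) (Fin r) ℝ)
    (C : Set (Fin q → ℝ)) (hC : C = {y | ∀ j, 0 ≤ Z.transpose.mulVec y j})
    (S : Set (Fin n → ℝ))
    (UI : Set (Fin q → ℝ)) (hUI : UI = (P.mulVec '' S) + C)
    (L : Set (Fin q → ℝ)) (hL : L = recCone UI ∩ (-recCone UI))
    (hLC : L ∩ C = {0})
    (Xpoi Xdir : Set ((Fin n → ℝ) × (Fin q → ℝ)))
    (hirr : IsIrredundantPPSolution A b P Z UI Xpoi Xdir) :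
    ∀ s ∈ Xpoi, s.2 ∉ UI + (C \ {0}) := by
  obtain ⟨hsol, hmin⟩ := hirr
  have ⟨hfin, hfinDir, _, _, _, hUIeq⟩ := hsol
  rw [coneOf_eq_hull] at hUIeq
  set K := hull ℝ (Prod.snd '' Xdir)
  rintro s hs ⟨u, hu, c, ⟨hcC, hc0⟩, hsum⟩
  have hCadd : ∀ a ∈ C, ∀ a' ∈ C, a + a' ∈ C := by
    subst hC
    intro a ha a' ha' j
    simpa [Matrix.mulVec_add] using add_nonneg (ha j) (ha' j)
  have hcrec : c ∈ recCone UI := hUI ▸ subset_recCone_add hCadd hcC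
  have hcK : c ∈ K :=
    mem_of_forall_add_mem_bounded_add (((hfin.image _).isCompact_convexHull ℝ).isBounded)
      ⟨s.2, subset_convexHull ℝ _ (mem_image_of_mem _ hs)⟩
      (isClosed_hull_of_finite (hfinDir.image _)) (hUIeq ▸ hcrec)
  have hKc : ∀ k ∈ K, k + c ≠ 0 := by
    intro k hk hkc
    have hkrec : k ∈ recCone UI :=
      hUIeq ▸ subset_recCone_add (fun _ ha _ ha' => K.add_mem ha ha') hk
    have hcL : c ∈ L ∩ C := ⟨hL ▸ ⟨hcrec, by rwa [mem_neg, neg_eq_of_add_eq_zero_left hkc]⟩, hcC⟩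
    exact hc0 (hLC ▸ hcL)
  rw [hUIeq, image_eq_insert_image_sdiff_singleton hs] at hu
  have hsol' := hsol.sdiff_singleton hs (by
    rw [coneOf_eq_hull]; exact mem_convexHull_add_of_add_eq hu hcK hKc hsum)
  have hXpoi : Xpoi \ {s} = Xpoi := (hmin _ _ sdiff_subset subset_rfl hsol').1
  exact (hXpoi.ge hs).2 rfl

theorem irredundant_points_are_minimizers
    (m n q r : ℕ) (A : Matrix (Fin m) (Fin n) ℝ) (b : Fin m → ℝ)
    (P : Matrix (Fin q) (Fin n) ℝ) (Z : Matrix (Fin q) (Fin r) ℝ)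
    (hker : ∀ y : Fin q → ℝ, Z.transpose.mulVec y = 0 → y = 0)
    (C : Set (Fin q → ℝ)) (hC : C = {y | ∀ j, 0 ≤ Z.transpose.mulVec y j})
    (S : Set (Fin n → ℝ)) (hS : S = {x | ∀ i, b i ≤ A.mulVec x i})
    (hSne : S.Nonempty)
    (UI : Set (Fin q → ℝ)) (hUI : UI = (P.mulVec '' S) + C)
    (L : Set (Fin q → ℝ)) (hL : L = recCone UI ∩ (-recCone UI))
    (hLC : L ∩ C = {0})
    (Xpoi Xdir : Set ((Fin n → ℝ) × (Fin q → ℝ)))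
    (hirr : IsIrredundantPPSolution A b P Z UI Xpoi Xdir) :
    ∀ s ∈ Xpoi, s.2 ∉ UI + (C \ {0}) :=
  irredundant_points_are_minimizers_general m n q r A b P Z C hC S UI hUI L hL hLC Xpoi Xdir hirr
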